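/- (Unconditional approximation bound for Lipschitz networks) Let f be a network map assigning to each weight matrix W' ∈ ℝ^{L×P} a function f(·; W') : X → ℝ^{m} on a set X, and suppose that for all W₁, W₂ ∈ ℝ^{L×P} and all x ∈ X, ‖f(x; W₁) − f(x; W₂)‖ ≤ K·‖W₁ − W₂‖_F for some constant K > 0. Then for every W ∈ ℝ^{L×P} and every N ≥ 1, there exist templates T₁, …, T_N ∈ ℝ^{1×A} and scalers S₁, …, S_N ∈ ℝ^{L×B} such that, setting W_⋆ = Σ_{i=1}^{N} T_i ⊗ S_i, one has sup_{x ∈ X} ‖f(x; W_⋆) − f(x; W)‖ ≤ K · (Σ_{j=N+1}^{min(L·B, A)} σ_j(R(W))²)^{1/2}. -/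

import Mathlib

open Matrix

noncomputable section

/-- Pair-index encoding `(i, j) ↦ j + n·i`, the zero-based form of `(i−1)·n + j`. -/
def pairIdx {m n : ℕ} (i : Fin m) (j : Fin n) : Fin (m * n) := finProdFinEquiv (i, j)

/-- The rearrangement operator `R : ℝ^{L×(A·B)} → ℝ^{(L·B)×A}` defined entrywise by
`R(W)_{(ℓ−1)B+b, a} = W_{ℓ, (a−1)B+b}`. -/
def rearrange (L A B : ℕ) (W : Matrix (Fin L) (Fin (A * B)) ℝ) :
    Matrix (Fin (L * B)) (Fin A) ℝ := fun r a =>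
  W (finProdFinEquiv.symm r).1 (pairIdx a (finProdFinEquiv.symm r).2)

/-- The Kronecker product of a row template `T ∈ ℝ^{1×A}` with a scaler `S ∈ ℝ^{L×B}`:
`(T ⊗ S)_{ℓ, (a−1)B+b} = T_{1,a} · S_{ℓ,b}`. -/
def kron {L A B : ℕ} (T : Matrix (Fin 1) (Fin A) ℝ) (S : Matrix (Fin L) (Fin B) ℝ) :
    Matrix (Fin L) (Fin (A * B)) ℝ := fun ℓ c =>
  T 0 (finProdFinEquiv.symm c).1 * S ℓ (finProdFinEquiv.symm c).2

/-- The Frobenius norm `‖M‖_F = (Σ_{i,j} M_{ij}²)^{1/2}`. -/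
def frobNorm {m n : ℕ} (M : Matrix (Fin m) (Fin n) ℝ) : ℝ :=
  Real.sqrt (∑ i, ∑ j, (M i j) ^ 2)

/-- `svals M j` is the `j`-th largest singular value (1-based index `j`) of the real
matrix `M`: the square root of the `j`-th largest eigenvalue of `MᵀM`. -/
def svals {m n : ℕ} (M : Matrix (Fin m) (Fin n) ℝ) : ℕ → ℝ := fun j =>
  Real.sqrt
    ((((List.ofFn
        ((show (Mᵀ * M).IsHermitian by
            rw [← Matrix.conjTranspose_eq_transpose_of_trivial]
            exact Matrix.isHermitian_conjTranspose_mul_self M).eigenvalues)).insertionSort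
        (· ≤ ·)).reverse).getD (j - 1) 0)

/-!
Eckart–Young, achievability half: if `v₁, v₂, …` are orthonormal eigenvectors of `MᵀM` ordered
by decreasing eigenvalue, then `M = ∑ₖ (M vₖ) vₖᵀ`, and since the `vₖ` are orthonormal the
Frobenius norm of any partial sum is `(∑ ‖M vₖ‖²)^{1/2} = (∑ σₖ²)^{1/2}`; truncating after `N`
terms leaves exactly the tail `σ_{N+1}, …`, whose terms vanish past index `rank M ≤ min p q`.

`R` only permutes entries, so it preserves the Frobenius norm, and it sends `T ⊗ S` to the outer
product `vec(S) T`. A rank-`N` approximation of `R(W)` therefore comes from an `N`-term Kronecker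
sum with the same Frobenius error, and the Lipschitz bound transfers that error to `f`.
-/

open Finset

theorem sum_range_sub_sum_range_eq_sum_Ico_of_eq_zero {G : Type*} [AddCommGroup G] {f : ℕ → G}
    {q : ℕ} (hf : ∀ k, q ≤ k → f k = 0) (N : ℕ) :
    ∑ k ∈ range q, f k - ∑ k ∈ range N, f k = ∑ k ∈ Ico N q, f k := by
  rcases le_total N q with h | h
  · exact (sum_Ico_eq_sub f h).symm
  · rw [Ico_eq_empty_of_le h, sum_empty, ← sum_range_add_sum_Ico f h,
      sum_eq_zero fun k hk => hf k (mem_Ico.1 hk).1, add_zero, sub_self]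

theorem Antitone.eq_zero_of_card_ne_zero_le {q p : ℕ} {f : Fin q → ℝ} (hf : Antitone f)
    (hf₀ : ∀ i, 0 ≤ f i) (hcard : #{i | f i ≠ 0} ≤ p) {k : Fin q} (hk : p ≤ k) : f k = 0 := by
  by_contra hne
  have hsub : Iic k ⊆ ({i | f i ≠ 0} : Finset (Fin q)) := fun i hi =>
    mem_filter.2 ⟨mem_univ i, (lt_of_lt_of_le ((hf₀ k).lt_of_ne' hne) (hf (mem_Iic.1 hi))).ne'⟩
  have := card_le_card hsub
  rw [Fin.card_Iic] at this
  omega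

section OuterProducts

variable {ι m n : Type*} [Fintype n]

theorem sum_sq_sum_vecMulVec_of_orthonormal [Fintype m] [DecidableEq ι] (s : Finset ι)
    (x : ι → m → ℝ) (e : ι → n → ℝ) (he : ∀ k ∈ s, ∀ l ∈ s, e k ⬝ᵥ e l = if k = l then 1 else 0) :
    ∑ r, ∑ a, (∑ k ∈ s, vecMulVec (x k) (e k)) r a ^ 2 = ∑ k ∈ s, x k ⬝ᵥ x k := by
  calc ∑ r, ∑ a, (∑ k ∈ s, vecMulVec (x k) (e k)) r a ^ 2
      = ∑ k ∈ s, ∑ l ∈ s, (x k ⬝ᵥ x l) * (e k ⬝ᵥ e l) := by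
        simp only [Matrix.sum_apply, vecMulVec_apply, sq, sum_mul_sum, dotProduct]
        simp_rw [sum_comm (s := (univ : Finset n)) (t := s),
          sum_comm (s := (univ : Finset m)) (t := s)]
        exact sum_congr rfl fun _ _ => sum_congr rfl fun _ _ =>
          sum_congr rfl fun _ _ => sum_congr rfl fun _ _ => by ring
    _ = ∑ k ∈ s, x k ⬝ᵥ x k := sum_congr rfl fun k hk => by
        rw [sum_congr rfl fun l hl => by rw [he k hk l hl]]
        simp [hk]

theorem sum_vecMulVec_mulVec_of_orthonormal [DecidableEq n] (M : Matrix m n ℝ) (e : n → n → ℝ)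
    (he : ∀ k l, e k ⬝ᵥ e l = if k = l then 1 else 0) :
    ∑ k, vecMulVec (M *ᵥ e k) (e k) = M := by
  have hrows : of e * (of e)ᵀ = 1 := by
    ext k l
    simpa [mul_apply, one_apply, dotProduct] using he k l
  calc ∑ k, vecMulVec (M *ᵥ e k) (e k) = M * ((of e)ᵀ * of e) := by
        ext r a
        simp only [Matrix.sum_apply, vecMulVec_apply, mul_apply, mulVec, dotProduct, sum_mul,
          mul_sum, transpose_apply, of_apply, mul_assoc]
        rw [sum_comm]
    _ = M := by rw [mul_eq_one_comm.mp hrows, Matrix.mul_one]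

end OuterProducts

theorem List.insertionSort_ofFn {q : ℕ} (f : Fin q → ℝ) :
    (List.ofFn f).insertionSort (· ≤ ·) = List.ofFn (f ∘ Tuple.sort f) :=
  List.Perm.eq_of_pairwise'
    (List.pairwise_insertionSort _ _)
    (List.sortedLE_iff_pairwise.mp (List.sortedLE_ofFn_iff.mpr (Tuple.monotone_sort f)))
    ((List.perm_insertionSort _ _).trans ((Tuple.sort f).ofFn_comp_perm f).symm)

theorem List.reverse_ofFn {α : Type*} {q : ℕ} (f : Fin q → α) :
    (List.ofFn f).reverse = List.ofFn (f ∘ Fin.rev) := by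
  refine List.ext_getElem (by simp) fun k hk _ => ?_
  simp only [List.getElem_reverse, List.getElem_ofFn, List.length_ofFn, Function.comp_apply]
  congr 1
  ext
  simp only [Fin.val_rev]
  omega

section SingularValues

variable {p q : ℕ} (M : Matrix (Fin p) (Fin q) ℝ)

theorem isHermitian_transpose_mul_self : (Mᵀ * M).IsHermitian := by
  rw [← conjTranspose_eq_transpose_of_trivial]
  exact isHermitian_conjTranspose_mul_self M

theorem eigenvalues_transpose_mul_self_nonneg (i : Fin q) :
    0 ≤ (isHermitian_transpose_mul_self M).eigenvalues i := by
  have h := posSemidef_conjTranspose_mul_self M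
  rw [conjTranspose_eq_transpose_of_trivial] at h
  exact h.eigenvalues_nonneg i

/-- `descendingEigenIndex M k` indexes the `(k+1)`-th largest eigenvalue of `MᵀM`. -/
def descendingEigenIndex : Equiv.Perm (Fin q) :=
  Fin.revPerm.trans (Tuple.sort (isHermitian_transpose_mul_self M).eigenvalues)

theorem antitone_eigenvalues_descendingEigenIndex :
    Antitone ((isHermitian_transpose_mul_self M).eigenvalues ∘ descendingEigenIndex M) :=
  fun _ _ h => Tuple.monotone_sort _ (Fin.rev_anti h)

theorem svals_succ (k : Fin q) :
    svals M (k + 1) =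
      √((isHermitian_transpose_mul_self M).eigenvalues (descendingEigenIndex M k)) := by
  simp [svals, List.insertionSort_ofFn, List.reverse_ofFn, descendingEigenIndex]

theorem card_eigenvalues_transpose_mul_self_ne_zero_le :
    #{i | (isHermitian_transpose_mul_self M).eigenvalues i ≠ 0} ≤ p := by
  rw [← Fintype.card_subtype, ← (isHermitian_transpose_mul_self M).rank_eq_card_non_zero_eigs,
    rank_transpose_mul_self]
  exact rank_le_height M

theorem svals_eq_zero_of_min_lt {j : ℕ} (hj : min p q < j) : svals M j = 0 := by
  set ev := (isHermitian_transpose_mul_self M).eigenvalues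
  rcases le_or_gt j q with hjq | hqj
  · obtain ⟨k, rfl⟩ : ∃ k, j = k + 1 := Nat.exists_eq_add_one.mpr (by omega)
    have hcard : #{i | (ev ∘ descendingEigenIndex M) i ≠ 0} ≤ p := by
      rw [card_equiv (descendingEigenIndex M) (t := {i | ev i ≠ 0}) (by simp)]
      exact card_eigenvalues_transpose_mul_self_ne_zero_le M
    have hzero := (antitone_eigenvalues_descendingEigenIndex M).eq_zero_of_card_ne_zero_le
      (fun _ => eigenvalues_transpose_mul_self_nonneg M _) hcard (k := ⟨k, by omega⟩)
      (show p ≤ k by omega)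
    simp only [Function.comp_apply] at hzero
    rw [svals_succ M ⟨k, by omega⟩, hzero, Real.sqrt_zero]
  · simp only [svals]
    rw [List.getD_eq_default _ _ (by simp; omega), Real.sqrt_zero]

end SingularValues

section SingularVectors

variable {p q : ℕ} (M : Matrix (Fin p) (Fin q) ℝ)

/-- The right singular vector `v_{k+1}` (1-based, as in `svals`), and `0` for `k ≥ q`. -/
def rightSingularVec (k : ℕ) : Fin q → ℝ :=
  if h : k < q then
    ((isHermitian_transpose_mul_self M).eigenvectorBasis (descendingEigenIndex M ⟨k, h⟩)).ofLp
  else 0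

theorem rightSingularVec_of_le {k : ℕ} (hk : q ≤ k) : rightSingularVec M k = 0 := by
  simp [rightSingularVec, not_lt.2 hk]

theorem rightSingularVec_dotProduct {k l : ℕ} (hk : k < q) (hl : l < q) :
    rightSingularVec M k ⬝ᵥ rightSingularVec M l = if k = l then 1 else 0 := by
  have h := orthonormal_iff_ite.mp (isHermitian_transpose_mul_self M).eigenvectorBasis.orthonormal
    (descendingEigenIndex M ⟨l, hl⟩) (descendingEigenIndex M ⟨k, hk⟩)
  simp only [EuclideanSpace.inner_eq_star_dotProduct, star_trivial, EmbeddingLike.apply_eq_iff_eq,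
    Fin.mk.injEq, rightSingularVec, hk, hl, ↓reduceDIte] at h ⊢
  exact h.trans (if_congr eq_comm rfl rfl)

theorem sum_range_vecMulVec_rightSingularVec :
    ∑ k ∈ range q, vecMulVec (M *ᵥ rightSingularVec M k) (rightSingularVec M k) = M := by
  rw [← Fin.sum_univ_eq_sum_range
    (fun k => vecMulVec (M *ᵥ rightSingularVec M k) (rightSingularVec M k))]
  exact sum_vecMulVec_mulVec_of_orthonormal M _ fun k l => by
    rw [rightSingularVec_dotProduct M k.2 l.2]
    exact if_congr Fin.val_inj rfl rfl

theorem dotProduct_mulVec_rightSingularVec (k : ℕ) :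
    (M *ᵥ rightSingularVec M k) ⬝ᵥ (M *ᵥ rightSingularVec M k) = svals M (k + 1) ^ 2 := by
  rcases lt_or_ge k q with hk | hk
  · have hunit := rightSingularVec_dotProduct M hk hk
    rw [if_pos rfl] at hunit
    have heig := (isHermitian_transpose_mul_self M).mulVec_eigenvectorBasis
      (descendingEigenIndex M ⟨k, hk⟩)
    rw [svals_succ M ⟨k, hk⟩, Real.sq_sqrt (eigenvalues_transpose_mul_self_nonneg M _),
      dotProduct_mulVec, ← mulVec_transpose, mulVec_mulVec]
    simp only [rightSingularVec, dif_pos hk] at hunit ⊢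
    rw [heig, smul_dotProduct, hunit, smul_eq_mul, mul_one]
  · rw [rightSingularVec_of_le M hk, mulVec_zero, zero_dotProduct,
      svals_eq_zero_of_min_lt M (by omega), sq, mul_zero]

end SingularVectors

theorem exists_frobNorm_sub_sum_vecMulVec_eq {p q : ℕ} (N : ℕ) (M : Matrix (Fin p) (Fin q) ℝ) :
    ∃ (u : Fin N → Fin p → ℝ) (v : Fin N → Fin q → ℝ),
      frobNorm (M - ∑ i, vecMulVec (u i) (v i)) =
        √(∑ j ∈ Icc (N + 1) (min p q), svals M j ^ 2) := by
  set x : ℕ → Matrix (Fin p) (Fin q) ℝ :=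
    fun k => vecMulVec (M *ᵥ rightSingularVec M k) (rightSingularVec M k) with hx
  refine ⟨fun i => M *ᵥ rightSingularVec M i, fun i => rightSingularVec M i, ?_⟩
  have htail : M - ∑ i : Fin N, x i = ∑ k ∈ Ico N q, x k := by
    rw [Fin.sum_univ_eq_sum_range x, ← sum_range_sub_sum_range_eq_sum_Ico_of_eq_zero
      (fun k hk => by simp [hx, rightSingularVec_of_le M hk]), sum_range_vecMulVec_rightSingularVec]
  rw [frobNorm, htail, hx, sum_sq_sum_vecMulVec_of_orthonormal _ _ _ fun k hk l hl =>
    rightSingularVec_dotProduct M (mem_Ico.1 hk).2 (mem_Ico.1 hl).2]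
  congr 1
  calc ∑ k ∈ Ico N q, (M *ᵥ rightSingularVec M k) ⬝ᵥ (M *ᵥ rightSingularVec M k)
      = ∑ j ∈ Icc (N + 1) q, svals M j ^ 2 := by
        simp only [dotProduct_mulVec_rightSingularVec]
        rw [sum_Ico_add' (fun j => svals M j ^ 2), Ico_add_one_right_eq_Icc]
    _ = ∑ j ∈ Icc (N + 1) (min p q), svals M j ^ 2 :=
        (sum_subset (Icc_subset_Icc_right (min_le_right p q)) fun j hjq hj => by
          rw [svals_eq_zero_of_min_lt M (by simp only [mem_Icc] at hjq hj; omega), sq,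
            mul_zero]).symm

section Rearrangement

variable {L A B : ℕ}

theorem rearrange_sub (W₁ W₂ : Matrix (Fin L) (Fin (A * B)) ℝ) :
    rearrange L A B (W₁ - W₂) = rearrange L A B W₁ - rearrange L A B W₂ :=
  rfl

theorem rearrange_sum {ι : Type*} (s : Finset ι) (W : ι → Matrix (Fin L) (Fin (A * B)) ℝ) :
    rearrange L A B (∑ i ∈ s, W i) = ∑ i ∈ s, rearrange L A B (W i) := by
  ext r a
  simp [rearrange, Matrix.sum_apply]

theorem rearrange_kron_replicateRow (u : Fin (L * B) → ℝ) (v : Fin A → ℝ) :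
    rearrange L A B (kron (replicateRow (Fin 1) v) (of fun ℓ b => u (pairIdx ℓ b))) =
      vecMulVec u v := by
  ext r a
  simp only [rearrange, kron, pairIdx, Equiv.symm_apply_apply, replicateRow_apply, of_apply,
    Prod.mk.eta, Equiv.apply_symm_apply, vecMulVec_apply, mul_comm]

theorem frobNorm_rearrange (W : Matrix (Fin L) (Fin (A * B)) ℝ) :
    frobNorm (rearrange L A B W) = frobNorm W := by
  unfold frobNorm
  congr 1
  rw [← finProdFinEquiv.sum_comp]
  simp only [rearrange, pairIdx, Fintype.sum_prod_type, Equiv.symm_apply_apply]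
  refine sum_congr rfl fun ℓ _ => ?_
  rw [sum_comm, ← Fintype.sum_prod_type', finProdFinEquiv.sum_comp (fun j => W ℓ j ^ 2)]

end Rearrangement

theorem frobNorm_sub_comm {m n : ℕ} (M₁ M₂ : Matrix (Fin m) (Fin n) ℝ) :
    frobNorm (M₁ - M₂) = frobNorm (M₂ - M₁) := by
  simp only [frobNorm, Matrix.sub_apply, ← neg_sub (M₂ _ _), neg_sq]

theorem kron_approx_bound_lipschitz_general (L A B N : ℕ) {X : Type*} {m : ℕ}
    (f : Matrix (Fin L) (Fin (A * B)) ℝ → X → EuclideanSpace ℝ (Fin m))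
    (K : ℝ)
    (hLip : ∀ (W₁ W₂ : Matrix (Fin L) (Fin (A * B)) ℝ) (x : X),
      ‖f W₁ x - f W₂ x‖ ≤ K * frobNorm (W₁ - W₂))
    (W : Matrix (Fin L) (Fin (A * B)) ℝ) :
    ∃ (T : Fin N → Matrix (Fin 1) (Fin A) ℝ) (S : Fin N → Matrix (Fin L) (Fin B) ℝ),
      ∀ x : X, ‖f (∑ i, kron (T i) (S i)) x - f W x‖ ≤
        K * Real.sqrt
          (∑ j ∈ Finset.Icc (N + 1) (min (L * B) A), svals (rearrange L A B W) j ^ 2) := by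
  obtain ⟨u, v, huv⟩ := exists_frobNorm_sub_sum_vecMulVec_eq N (rearrange L A B W)
  refine ⟨fun i => replicateRow (Fin 1) (v i), fun i => of fun ℓ b => u i (pairIdx ℓ b),
    fun x => (hLip _ W x).trans_eq ?_⟩
  rw [← frobNorm_rearrange, rearrange_sub, rearrange_sum]
  simp only [rearrange_kron_replicateRow]
  rw [frobNorm_sub_comm, huv]

/-- Unconditional approximation bound for Lipschitz networks: for every `W`
and every `N ≥ 1`, some `N`-term Kronecker reconstruction `W_⋆` satisfies
`sup_x ‖f(x; W_⋆) − f(x; W)‖ ≤ K · (Σ_{j=N+1}^{min(L·B,A)} σ_j(R(W))²)^{1/2}`. -/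
theorem kron_approx_bound_lipschitz (L A B N : ℕ) (hL : 0 < L) (hA : 0 < A) (hB : 0 < B)
    (hN : 1 ≤ N) {X : Type*} {m : ℕ}
    (f : Matrix (Fin L) (Fin (A * B)) ℝ → X → EuclideanSpace ℝ (Fin m))
    (K : ℝ) (hK : 0 < K)
    (hLip : ∀ (W₁ W₂ : Matrix (Fin L) (Fin (A * B)) ℝ) (x : X),
      ‖f W₁ x - f W₂ x‖ ≤ K * frobNorm (W₁ - W₂))
    (W : Matrix (Fin L) (Fin (A * B)) ℝ) :
    ∃ (T : Fin N → Matrix (Fin 1) (Fin A) ℝ) (S : Fin N → Matrix (Fin L) (Fin B) ℝ),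
      ∀ x : X, ‖f (∑ i, kron (T i) (S i)) x - f W x‖ ≤
        K * Real.sqrt
          (∑ j ∈ Finset.Icc (N + 1) (min (L * B) A), svals (rearrange L A B W) j ^ 2) :=
  kron_approx_bound_lipschitz_general L A B N f K hLip W
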